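/- Let (R,m) be a 1-dimensional Cohen–Macaulay Noetherian local ring, and let x foundation ∈ m satisfy m^{n+1} = x m^n for some n ≥ 0 (i.e., (x) is a reduction of m). Call a finitely generated R-module M Ulrich if M is maximal Cohen–Macaulay and mM = xM. Then the following are equivalent: (1) R is a regular local ring; (2) the Ulrich modules are closed under extensions, i.e., for every short exact sequence 0 → N → X → M → 0 of finitely generated R-modules with M and N Ulrich, the module X is Ulrich; (3) there exist Ulrich modules M and N with M ≠ 0 and N faithful such that for every short exact sequence 0 → N → X → M → 0 of finitely generated R-modules, X is Ulrich. -/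

import Mathlib

/-! If `𝔪 = (x)`, Ulrich modules are the finite modules on which `x` is regular, and these are
closed under extensions. Conversely, let `0 → K → Rˢ → M → 0` be a minimal presentation, so that
`K ⊆ 𝔪Rˢ`. The pushout along any `h : K → N` is an extension `X` of `M` by `N`, and `𝔪X = xX`
applied to the class of `(0, z)`, `z ∈ K`, gives `h z ∈ xN`. As `x` is regular on `N`, `h = x • h'`
for some `h'`; iterating, `h` takes values in `⋂ₖ xᵏN = 0`. If `N` is faithful this forces
`K = 0`, so `M ≅ Rˢ` with `s > 0`, and `𝔪M = xM` gives `𝔪 = (x)`. For (2) ⇒ (1) take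
`M = N = 𝔪ⁿ`. Finally `R` is regular iff `𝔪` is principal, and a principal reduction of an ideal
generated by a nonzerodivisor generates it. -/

open IsLocalRing

/-- A local ring is regular if its maximal ideal is generated by `dim R` elements. -/
def IsRegularLocal (R : Type) [CommRing R] [IsLocalRing R] : Prop :=
  ∃ (n : ℕ) (x : Fin n → R), Ideal.span (Set.range x) = maximalIdeal R ∧
    ringKrullDim R = n

/-- Over a `1`-dimensional Cohen–Macaulay local ring with principal reduction `x` of `𝔪`,
a finitely generated module `M` is Ulrich if it is maximal Cohen–Macaulay (depth `1`,
i.e. some element of `𝔪` is `M`-regular) and `𝔪M = xM`. -/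
def IsUlrich (R : Type) [CommRing R] [IsLocalRing R] (x : R)
    (M : Type) [AddCommGroup M] [Module R M] : Prop :=
  Module.Finite R M ∧ (∃ y ∈ maximalIdeal R, IsSMulRegular M y) ∧
    maximalIdeal R • (⊤ : Submodule R M) = Ideal.span {x} • (⊤ : Submodule R M)

open Submodule

section Regularity

variable {R M : Type*} [CommRing R] [AddCommGroup M] [Module R M]

lemma Submodule.mem_span_singleton_smul_top_iff {x : R} {p : M} :
    p ∈ Ideal.span {x} • (⊤ : Submodule R M) ↔ ∃ q, x • q = p := by
  rw [ideal_span_singleton_smul, mem_smul_pointwise_iff_exists]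
  exact ⟨fun ⟨q, _, hq⟩ => ⟨q, hq⟩, fun ⟨q, hq⟩ => ⟨q, mem_top, hq⟩⟩

lemma IsSMulRegular.of_pow_succ_eq_span_mul {I : Ideal R} {x y : R} {n : ℕ}
    (hred : I ^ (n + 1) = Ideal.span {x} * I ^ n) (hy : y ∈ I) (hreg : IsSMulRegular M y) :
    IsSMulRegular M x := by
  have hmem : y ^ (n + 1) ∈ Ideal.span {x} * I ^ n := by
    rw [← hred]; exact Ideal.pow_mem_pow hy (n + 1)
  obtain ⟨c, hc⟩ := Ideal.mem_span_singleton'.mp (Ideal.mul_le_left hmem)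
  have := hreg.pow (n + 1)
  rw [← hc] at this
  exact this.of_mul

lemma IsSMulRegular.of_exact {X N : Type*} [AddCommGroup X] [Module R X] [AddCommGroup N]
    [Module R N] {r : R} {f : N →ₗ[R] X} {g : X →ₗ[R] M} (hf : Function.Injective f)
    (hfg : Function.Exact f g) (hN : IsSMulRegular N r) (hM : IsSMulRegular M r) :
    IsSMulRegular X r := by
  refine isSMulRegular_iff_right_eq_zero_of_smul.mpr fun z hz => ?_
  obtain ⟨w, rfl⟩ := (hfg z).mp <| hM.right_eq_zero_of_smul <| by rw [← map_smul, hz, map_zero]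
  rw [← map_smul, ← map_zero f] at hz
  rw [hN.right_eq_zero_of_smul (hf hz), map_zero]

lemma Function.Exact.exists_eq_smul_of_map_eq_smul {X N : Type*} [AddCommGroup X] [Module R X]
    [AddCommGroup N] [Module R N] {r : R} {f : N →ₗ[R] X} {g : X →ₗ[R] M}
    (hf : Function.Injective f) (hfg : Function.Exact f g) (hM : IsSMulRegular M r) {n : N}
    {q : X} (hq : f n = r • q) : ∃ n', n = r • n' := by
  obtain ⟨n', rfl⟩ := (hfg q).mp <| hM.right_eq_zero_of_smul <| by
    rw [← map_smul, ← hq, hfg.apply_apply_eq_zero]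
  exact ⟨n', hf (by rw [hq, map_smul])⟩

end Regularity

lemma Ideal.span_singleton_eq_of_pow_succ_eq_span_mul {R : Type*} [CommRing R] {t x : R}
    (ht : IsSMulRegular R t) {n : ℕ}
    (hred : Ideal.span {t} ^ (n + 1) = Ideal.span {x} * Ideal.span {t} ^ n) :
    Ideal.span {t} = Ideal.span {x} := by
  rw [Ideal.span_singleton_pow, Ideal.span_singleton_pow,
    Ideal.span_singleton_mul_span_singleton] at hred
  have cancel {a b : R} (h : t ^ n * a ∣ t ^ n * b) : a ∣ b := by
    obtain ⟨c, hc⟩ := h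
    exact ⟨c, (ht.pow n) (by simp only [smul_eq_mul]; rw [hc]; ring)⟩
  refine le_antisymm ?_ ?_ <;> rw [Ideal.span_singleton_le_span_singleton] <;> apply cancel <;>
    rw [← pow_succ, mul_comm, ← Ideal.span_singleton_le_span_singleton, hred]

lemma isRegularLocal_iff_exists_maximalIdeal_eq_span_singleton {R : Type} [CommRing R]
    [IsLocalRing R] (hdim : ringKrullDim R = 1) :
    IsRegularLocal R ↔ ∃ t, maximalIdeal R = Ideal.span {t} := by
  constructor
  · rintro ⟨n, gens, hspan, hn⟩
    obtain rfl : n = 1 := by exact_mod_cast hn.symm.trans hdim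
    exact ⟨gens 0, by rw [← hspan, Set.range_unique]; rfl⟩
  · rintro ⟨t, ht⟩
    exact ⟨1, fun _ => t, by rw [Set.range_const, ht], by rw [hdim]; rfl⟩

lemma nontrivial_of_forall_smul_eq_zero {R N : Type*} [Ring R] [Nontrivial R] [AddCommGroup N]
    [Module R N] (hN : ∀ r : R, (∀ z : N, r • z = 0) → r = 0) : Nontrivial N := by
  by_contra hsub
  rw [not_nontrivial_iff_subsingleton] at hsub
  exact one_ne_zero (hN 1 fun _ => Subsingleton.elim _ _)

lemma Ideal.eq_zero_of_forall_smul_eq_zero {R : Type*} [CommRing R] {I : Ideal R} {y : R}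
    (hy : y ∈ I) (hreg : IsSMulRegular R y) (r : R) (hr : ∀ z : I, r • z = 0) : r = 0 :=
  hreg <| by simpa [mul_comm] using congrArg Subtype.val (hr ⟨y, hy⟩)

section Ulrich

variable {R : Type} [CommRing R] [IsLocalRing R] {x : R}

lemma IsUlrich.isSMulRegular {M : Type} [AddCommGroup M] [Module R M] (hM : IsUlrich R x M)
    {n : ℕ} (hred : maximalIdeal R ^ (n + 1) = Ideal.span {x} * maximalIdeal R ^ n) :
    IsSMulRegular M x :=
  let ⟨_, hy, hreg⟩ := hM.2.1
  hreg.of_pow_succ_eq_span_mul hred hy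

lemma isUlrich_of_exact_of_maximalIdeal_eq (hm : maximalIdeal R = Ideal.span {x})
    {N M X : Type} [AddCommGroup N] [Module R N] [AddCommGroup M] [Module R M] [AddCommGroup X]
    [Module R X] [Module.Finite R X] {f : N →ₗ[R] X} {g : X →ₗ[R] M}
    (hf : Function.Injective f) (hfg : Function.Exact f g) (hN : IsSMulRegular N x)
    (hM : IsSMulRegular M x) : IsUlrich R x X :=
  ⟨inferInstance, ⟨x, hm ▸ Ideal.mem_span_singleton_self x, hN.of_exact hf hfg hM⟩, by rw [hm]⟩

lemma isUlrich_maximalIdeal_pow [IsNoetherianRing R] {n : ℕ}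
    (hred : maximalIdeal R ^ (n + 1) = Ideal.span {x} * maximalIdeal R ^ n) {y : R}
    (hy : y ∈ maximalIdeal R) (hreg : IsSMulRegular R y) :
    IsUlrich R x ↥(maximalIdeal R ^ n) := by
  refine ⟨inferInstance, ⟨y, hy, hreg.submodule _ _⟩, ?_⟩
  apply map_injective_of_injective (maximalIdeal R ^ n).injective_subtype
  rw [map_smul'', map_smul'', Submodule.map_top, range_subtype, Ideal.smul_eq_mul,
    Ideal.smul_eq_mul, ← pow_succ', hred]

end Ulrich

theorem IsLocalRing.exists_surjective_pi_ker_apply_mem_maximalIdeal {R : Type*} [CommRing R]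
    [IsLocalRing R] (M : Type*) [AddCommGroup M] [Module R M] [Module.Finite R M] :
    ∃ (s : Finset M) (π : (s → R) →ₗ[R] M), Function.Surjective π ∧
      ∀ v, π v = 0 → ∀ i, v i ∈ maximalIdeal R := by
  classical
  obtain ⟨s, hcard, hspan⟩ :=
    (Module.Finite.fg_top (R := R) (M := M)).exists_span_finset_card_eq_spanFinrank
  refine ⟨s, Fintype.linearCombination R Subtype.val, ?_, fun v hv i => ?_⟩
  · rw [← span_range_eq_top_iff_surjective_fintypeLinearCombination]
    simpa using hspan
  -- a relation with a unit coefficient at `i` makes the generator `i` redundant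
  by_contra hvi
  obtain ⟨u, hu⟩ := IsLocalRing.notMem_maximalIdeal.mp hvi
  rw [Fintype.linearCombination_apply, ← Finset.add_sum_erase _ _ (Finset.mem_univ i)] at hv
  set E : Set M := ((s.erase i : Finset M) : Set M) with hE
  have hi : (i : M) ∈ span R E := by
    rw [← one_smul R (i : M), ← u.inv_mul, mul_smul, hu, eq_neg_of_add_eq_zero_left hv]
    refine smul_mem _ _ (neg_mem (sum_mem fun j hj => smul_mem _ _ (subset_span ?_)))
    exact hE ▸ Finset.mem_coe.mpr
      (Finset.mem_erase.mpr ⟨Subtype.coe_injective.ne (Finset.ne_of_mem_erase hj), j.2⟩)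
  have htop : span R E = ⊤ := by
    rw [← hspan, ← span_insert_eq_span hi, hE, ← Finset.coe_insert, Finset.insert_erase i.2]
  have hle := spanFinrank_span_le_ncard_of_finite (R := R) (s.erase i).finite_toSet
  rw [← hE, htop, ← hcard, Set.ncard_coe_finset, Finset.card_erase_of_mem i.2] at hle
  have := Finset.card_pos.mpr ⟨i.1, i.2⟩
  omega

section Pushout

variable {R : Type*} [CommRing R] {N F M : Type*} [AddCommGroup N] [Module R N] [AddCommGroup F]
  [Module R F] [AddCommGroup M] [Module R M] {π : F →ₗ[R] M} (h : LinearMap.ker π →ₗ[R] N)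

def KerPushout.rel : Submodule R (N × F) :=
  LinearMap.range (h.prod (-(LinearMap.ker π).subtype))

abbrev KerPushout : Type _ := (N × F) ⧸ KerPushout.rel h

namespace KerPushout

def inl : N →ₗ[R] KerPushout h := (rel h).mkQ ∘ₗ LinearMap.inl R N F

def proj : KerPushout h →ₗ[R] M :=
  (rel h).liftQ (π ∘ₗ LinearMap.snd R N F) <| by
    rintro _ ⟨z, rfl⟩
    simp

lemma mkQ_inr (z : LinearMap.ker π) : (rel h).mkQ (0, (z : F)) = inl h (h z) := by
  refine (Submodule.Quotient.eq _).mpr ⟨-z, ?_⟩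
  simp

lemma inl_injective : Function.Injective (inl h) := by
  refine (injective_iff_map_eq_zero _).mpr fun n hn => ?_
  obtain ⟨z, hz⟩ := (Submodule.Quotient.mk_eq_zero _).mp hn
  obtain rfl : z = 0 := by simpa using congrArg Prod.snd hz
  simpa using (congrArg Prod.fst hz).symm

lemma proj_surjective (hπ : Function.Surjective π) : Function.Surjective (proj h) := fun m =>
  let ⟨v, hv⟩ := hπ m
  ⟨(rel h).mkQ (0, v), hv⟩

lemma exact_inl_proj : Function.Exact (inl h) (proj h) := by
  refine fun q => ⟨fun hq => ?_, ?_⟩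
  · obtain ⟨⟨n, v⟩, rfl⟩ := (rel h).mkQ_surjective q
    have hv : v ∈ LinearMap.ker π := hq
    refine ⟨n + h ⟨v, hv⟩, ?_⟩
    calc inl h (n + h ⟨v, hv⟩) = (rel h).mkQ (n, 0) + (rel h).mkQ (0, v) := by
          rw [map_add, ← mkQ_inr]; rfl
      _ = (rel h).mkQ (n, v) := by rw [← map_add, Prod.mk_add_mk, add_zero, zero_add]
  · rintro ⟨n, rfl⟩
    simp [inl, proj]

lemma exists_eq_smul {I : Ideal R} {x : R}
    (hX : I • (⊤ : Submodule R (KerPushout h)) = Ideal.span {x} • ⊤) (hxM : IsSMulRegular M x)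
    (z : LinearMap.ker π) (hz : (z : F) ∈ I • (⊤ : Submodule R F)) : ∃ n, h z = x • n := by
  have hmem : (rel h).mkQ (0, (z : F)) ∈ I • (⊤ : Submodule R (KerPushout h)) :=
    smul_top_le_comap_smul_top I ((rel h).mkQ ∘ₗ LinearMap.inr R N F) hz
  rw [mkQ_inr, hX, mem_span_singleton_smul_top_iff] at hmem
  obtain ⟨q, hq⟩ := hmem
  exact (exact_inl_proj h).exists_eq_smul_of_map_eq_smul (inl_injective h) hxM hq.symm

end KerPushout

end Pushout

section Divisibility

variable {R K N : Type*} [CommRing R] [AddCommGroup K] [Module R K] [AddCommGroup N] [Module R N]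

lemma Pi.mem_smul_top_of_forall_mem {ι : Type*} [Fintype ι] {I : Ideal R} {v : ι → R}
    (hv : ∀ i, v i ∈ I) : v ∈ I • (⊤ : Submodule R (ι → R)) := by
  classical
  rw [pi_eq_sum_univ v]
  exact sum_mem fun i _ => smul_mem_smul (hv i) mem_top

lemma LinearMap.exists_eq_smul_of_forall_exists_eq_smul {a : R} (ha : IsSMulRegular N a)
    (h : K →ₗ[R] N) (hh : ∀ z, ∃ n, h z = a • n) : ∃ h' : K →ₗ[R] N, h = a • h' := by
  choose φ hφ using hh
  refine ⟨{ toFun := φ, map_add' := fun z w => ha ?_, map_smul' := fun r z => ha ?_ },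
    LinearMap.ext hφ⟩
  · dsimp only
    rw [smul_add, ← hφ, ← hφ, ← hφ, map_add]
  · dsimp only
    rw [← hφ, RingHom.id_apply, smul_comm, ← hφ, map_smul]

lemma LinearMap.exists_eq_pow_smul {a : R} (hdiv : ∀ h : K →ₗ[R] N, ∃ h', h = a • h') (k : ℕ)
    (h : K →ₗ[R] N) : ∃ h', h = a ^ k • h' := by
  induction k generalizing h with
  | zero => exact ⟨h, by rw [pow_zero, one_smul]⟩
  | succ k ih =>
    obtain ⟨h', rfl⟩ := ih h
    obtain ⟨h'', rfl⟩ := hdiv h'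
    exact ⟨h'', by rw [pow_succ, mul_smul]⟩

lemma IsLocalRing.eq_zero_of_forall_exists_eq_pow_smul [IsLocalRing R] [IsNoetherianRing R]
    [Module.Finite R N] {a : R} (ha : a ∈ maximalIdeal R) {n : N}
    (hn : ∀ k : ℕ, ∃ n', n = a ^ k • n') : n = 0 := by
  have hmem : n ∈ ⨅ k : ℕ, maximalIdeal R ^ k • (⊤ : Submodule R N) :=
    mem_iInf _ |>.mpr fun k =>
      let ⟨n', hn'⟩ := hn k
      hn' ▸ smul_mem_smul (Ideal.pow_mem_pow ha k) mem_top
  rwa [Ideal.iInf_pow_smul_eq_bot_of_isLocalRing _ (maximalIdeal.isMaximal R).ne_top] at hmem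

lemma IsLocalRing.linearMap_eq_zero_of_forall_exists_eq_smul [IsLocalRing R] [IsNoetherianRing R]
    [Module.Finite R N] {a : R} (ha : a ∈ maximalIdeal R) (hreg : IsSMulRegular N a)
    (hdiv : ∀ (h : K →ₗ[R] N) z, ∃ n, h z = a • n) (h : K →ₗ[R] N) : h = 0 := by
  have hdiv' (h : K →ₗ[R] N) := h.exists_eq_smul_of_forall_exists_eq_smul hreg (hdiv h)
  refine LinearMap.ext fun z => eq_zero_of_forall_exists_eq_pow_smul ha fun k => ?_
  obtain ⟨h', rfl⟩ := LinearMap.exists_eq_pow_smul hdiv' k h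
  exact ⟨h' z, rfl⟩

end Divisibility

lemma Submodule.eq_bot_of_forall_linearMap_eq_zero {R N ι : Type*} [CommRing R] [AddCommGroup N]
    [Module R N] {K : Submodule R (ι → R)} (hN : ∀ r : R, (∀ z : N, r • z = 0) → r = 0)
    (h0 : ∀ h : K →ₗ[R] N, h = 0) : K = ⊥ := by
  refine eq_bot_iff.mpr fun v hv => (mem_bot R).mpr <| funext fun i => hN (v i) fun n => ?_
  simpa using LinearMap.congr_fun (h0 ((LinearMap.proj i ∘ₗ K.subtype).smulRight n)) ⟨v, hv⟩

lemma Ideal.eq_of_smul_top_eq_of_surjective {R M : Type*} [CommRing R] [AddCommGroup M]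
    [Module R M] {I J : Ideal R} {φ : M →ₗ[R] R} (hφ : Function.Surjective φ)
    (h : I • (⊤ : Submodule R M) = J • ⊤) : I = J := by
  have := congrArg (Submodule.map φ) h
  rwa [Submodule.map_smul'', Submodule.map_smul'', Submodule.map_top,
    LinearMap.range_eq_top.mpr hφ, Ideal.smul_eq_mul, Ideal.smul_eq_mul, Ideal.mul_top,
    Ideal.mul_top] at this

section Main

variable {R : Type} [CommRing R] [IsLocalRing R] {x : R}

lemma isRegularLocal_iff_maximalIdeal_eq_span (hdim : ringKrullDim R = 1)
    (hCM : ∃ y ∈ maximalIdeal R, IsSMulRegular R y) {n : ℕ}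
    (hred : maximalIdeal R ^ (n + 1) = Ideal.span {x} * maximalIdeal R ^ n) :
    IsRegularLocal R ↔ maximalIdeal R = Ideal.span {x} := by
  rw [isRegularLocal_iff_exists_maximalIdeal_eq_span_singleton hdim]
  refine ⟨fun ⟨t, ht⟩ => ?_, fun hm => ⟨x, hm⟩⟩
  obtain ⟨y, hy, hreg⟩ := hCM
  obtain ⟨c, rfl⟩ := Ideal.mem_span_singleton'.mp (ht ▸ hy)
  rw [ht] at hred ⊢
  exact Ideal.span_singleton_eq_of_pow_succ_eq_span_mul hreg.of_mul hred

theorem maximalIdeal_eq_span_of_forall_extension_isUlrich [IsNoetherianRing R]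
    (hx : x ∈ maximalIdeal R) {n : ℕ}
    (hred : maximalIdeal R ^ (n + 1) = Ideal.span {x} * maximalIdeal R ^ n)
    {M N : Type} [AddCommGroup M] [Module R M] [AddCommGroup N] [Module R N]
    (hM : IsUlrich R x M) (hN : IsUlrich R x N) (hMnt : Nontrivial M)
    (hNf : ∀ r : R, (∀ z : N, r • z = 0) → r = 0)
    (H : ∀ (X : Type) [AddCommGroup X] [Module R X] [Module.Finite R X]
      (f : N →ₗ[R] X) (g : X →ₗ[R] M),
      Function.Injective f → Function.Surjective g → Function.Exact f g → IsUlrich R x X) :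
    maximalIdeal R = Ideal.span {x} := by
  have := hM.1
  have := hN.1
  obtain ⟨s, π, hπ, hker⟩ := IsLocalRing.exists_surjective_pi_ker_apply_mem_maximalIdeal (R := R) M
  have hK : LinearMap.ker π = ⊥ := by
    refine Submodule.eq_bot_of_forall_linearMap_eq_zero hNf <|
      IsLocalRing.linearMap_eq_zero_of_forall_exists_eq_smul hx (hN.isSMulRegular hred)
        fun h z => ?_
    have hX := H _ _ _ (KerPushout.inl_injective h) (KerPushout.proj_surjective h hπ)
      (KerPushout.exact_inl_proj h)
    exact KerPushout.exists_eq_smul h hX.2.2 (hM.isSMulRegular hred) z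
      (Pi.mem_smul_top_of_forall_mem (hker z z.2))
  let e := LinearEquiv.ofBijective π ⟨LinearMap.ker_eq_bot.mp hK, hπ⟩
  have := hπ.nontrivial
  obtain ⟨v, w, hvw⟩ := exists_pair_ne (s → R)
  obtain ⟨i, -⟩ := Function.ne_iff.mp hvw
  exact Ideal.eq_of_smul_top_eq_of_surjective (φ := LinearMap.proj i ∘ₗ e.symm.toLinearMap)
    ((LinearMap.proj_surjective (R := R) i).comp e.symm.surjective) hM.2.2

end Main

/-- Let `(R,𝔪)` be a `1`-dimensional Cohen–Macaulay Noetherian local ring and `x ∈ 𝔪`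
with `𝔪^{n+1} = x𝔪^n` for some `n`.  TFAE:
(1) `R` is regular;
(2) the Ulrich modules are closed under extensions;
(3) there are Ulrich modules `M ≠ 0` and `N` faithful such that the middle term of every
short exact sequence `0 → N → X → M → 0` is Ulrich. -/
theorem stmt16 (R : Type) [CommRing R] [IsLocalRing R] [IsNoetherianRing R]
    (hdim : ringKrullDim R = 1) (hCM : ∃ y ∈ maximalIdeal R, IsSMulRegular R y)
    (x : R) (hx : x ∈ maximalIdeal R)
    (hred : ∃ n : ℕ, maximalIdeal R ^ (n + 1) = Ideal.span {x} * maximalIdeal R ^ n) :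
    (IsRegularLocal R ↔
      (∀ (N : Type) [AddCommGroup N] [Module R N]
        (M : Type) [AddCommGroup M] [Module R M]
        (X : Type) [AddCommGroup X] [Module R X] [Module.Finite R X]
        (f : N →ₗ[R] X) (g : X →ₗ[R] M),
        IsUlrich R x N → IsUlrich R x M →
        Function.Injective f → Function.Surjective g → Function.Exact f g →
        IsUlrich R x X)) ∧
    (IsRegularLocal R ↔
      (∃ M N : ModuleCat.{0} R, IsUlrich R x ↥M ∧ IsUlrich R x ↥N ∧
        Nontrivial ↥M ∧ (∀ r : R, (∀ z : ↥N, r • z = 0) → r = 0) ∧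
        ∀ (X : Type) [AddCommGroup X] [Module R X] [Module.Finite R X]
          (f : ↥N →ₗ[R] X) (g : X →ₗ[R] ↥M),
          Function.Injective f → Function.Surjective g → Function.Exact f g →
          IsUlrich R x X)) := by
  obtain ⟨n, hn⟩ := hred
  have hreg := isRegularLocal_iff_maximalIdeal_eq_span hdim hCM hn
  obtain ⟨y, hy, hyreg⟩ := hCM
  refine ⟨hreg.trans ⟨fun hm N _ _ M _ _ X _ _ _ f g hN hM hf _ hfg => ?_, fun H => ?_⟩,
    hreg.trans ⟨fun hm => ?_, fun ⟨M, N, hM, hN, hMnt, hNf, H⟩ => ?_⟩⟩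
  · exact isUlrich_of_exact_of_maximalIdeal_eq hm hf hfg (hN.isSMulRegular hn)
      (hM.isSMulRegular hn)
  · have hU := isUlrich_maximalIdeal_pow hn hy hyreg
    have hfaith := Ideal.eq_zero_of_forall_smul_eq_zero (Ideal.pow_mem_pow hy n) (hyreg.pow n)
    exact maximalIdeal_eq_span_of_forall_extension_isUlrich hx hn hU hU
      (nontrivial_of_forall_smul_eq_zero hfaith) hfaith fun X _ _ _ f g => H _ _ X f g hU hU
  · have hU : IsUlrich R x R := ⟨inferInstance, ⟨y, hy, hyreg⟩, by rw [hm]⟩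
    refine ⟨ModuleCat.of R R, ModuleCat.of R R, hU, hU, inferInstanceAs (Nontrivial R),
      fun r hr => by simpa using hr 1, fun X _ _ _ f g hf _ hfg => ?_⟩
    exact isUlrich_of_exact_of_maximalIdeal_eq hm hf hfg (hU.isSMulRegular hn)
      (hU.isSMulRegular hn)
  · exact maximalIdeal_eq_span_of_forall_extension_isUlrich hx hn hM hN hMnt hNf H
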